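/- arXiv:2401.07097 — 6 statements merged into one kernel-verified Lean document; each statement's English description precedes it below -/
import Mathlib

section
/- If S₁ has a dense intersection with S₂, and S₃ is an ample subset of S₂, then S₁ has a dense intersection with S₃. -/
def Ample {n : ℕ} (S : Set (EuclideanSpace ℝ (Fin n))) : Prop :=
  S ⊆ closure (interior S)

/-- `S₁` has a dense intersection with `S₂` if `S₂ ⊆ cl (S₁ ∩ S₂)`. -/
def DenseInter {n : ℕ} (S₁ S₂ : Set (EuclideanSpace ℝ (Fin n))) : Prop :=
  S₂ ⊆ closure (S₁ ∩ S₂)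

section

open Set

variable {X : Type*} [TopologicalSpace X] {s t : Set X}

theorem interior_subset_closure_inter_of_subset_closure (h : t ⊆ closure s) :
    interior t ⊆ closure (s ∩ t) :=
  calc interior t = closure s ∩ interior t := (inter_eq_right.2 (interior_subset.trans h)).symm
    _ ⊆ closure (s ∩ interior t) := isOpen_interior.closure_inter
    _ ⊆ closure (s ∩ t) := closure_mono (inter_subset_inter_right s interior_subset)

theorem subset_closure_inter_of_subset_closure_interior (ht : t ⊆ closure (interior t))
    (hs : t ⊆ closure s) : t ⊆ closure (s ∩ t) :=
  ht.trans <| closure_minimal (interior_subset_closure_inter_of_subset_closure hs) isClosed_closure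

end

theorem denseInter_of_ample_subset {n : ℕ} (S₁ S₂ S₃ : Set (EuclideanSpace ℝ (Fin n)))
    (h12 : DenseInter S₁ S₂) (h3sub : S₃ ⊆ S₂) (h3 : Ample S₃) :
    DenseInter S₁ S₃ :=
  subset_closure_inter_of_subset_closure_interior h3 <|
    h3sub.trans <| h12.trans <| closure_mono Set.inter_subset_left
end

section
/- There exists a set S ⊆ ℝ² that is ample but does not have the interior cone property. Concretely, the epigraph S = {(t, y) ∈ ℝ² : y ≥ √|t|} of the function t ↦ √|t| is ample, yet S fails the interior cone property at the origin. -/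
open Filter Topology

local notation "ℝ²" => EuclideanSpace ℝ (Fin 2)

section AddSmul

variable {E : Type*} [AddCommGroup E] [Module ℝ E] [TopologicalSpace E] [ContinuousAdd E]
  [ContinuousSMul ℝ E]

lemma tendsto_add_smul_nhdsGT (x v : E) :
    Tendsto (fun ε : ℝ => x + ε • v) (𝓝[>] 0) (𝓝 x) :=
  ((continuous_const.add (continuous_id.smul continuous_const)).tendsto' 0 x
    (by simp)).mono_left nhdsWithin_le_nhds

lemma mem_closure_of_forall_pos_add_smul_mem {s : Set E} {x v : E}
    (h : ∀ ε : ℝ, 0 < ε → x + ε • v ∈ s) : x ∈ closure s :=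
  mem_closure_of_tendsto (tendsto_add_smul_nhdsGT x v)
    (eventually_nhdsWithin_of_forall h)

end AddSmul

section Epigraph

variable {f : ℝ → ℝ}

lemma ample_epigraph (hf : Continuous f) : Ample {x : ℝ² | f (x 0) ≤ x 1} := by
  intro x hx
  have hopen : IsOpen {y : ℝ² | f (y 0) < y 1} := isOpen_lt (by fun_prop) (by fun_prop)
  have hsub : {y : ℝ² | f (y 0) < y 1} ⊆ interior {y | f (y 0) ≤ y 1} :=
    interior_maximal (Set.ofPred_subset_ofPred.mpr fun _ => le_of_lt) hopen
  refine closure_mono hsub ?_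
  refine mem_closure_of_forall_pos_add_smul_mem (v := EuclideanSpace.single 1 1) fun ε hε => ?_
  have : f (x 0) < x 1 + ε := by linarith [hx.out]
  simpa using this

lemma mem_frontier_epigraph {x : ℝ²} (hx : f (x 0) = x 1) :
    x ∈ frontier {x : ℝ² | f (x 0) ≤ x 1} := by
  rw [frontier_eq_closure_inter_closure]
  refine ⟨subset_closure hx.le, mem_closure_of_forall_pos_add_smul_mem
    (v := -EuclideanSpace.single 1 1) fun ε hε => ?_⟩
  have : ¬ f (x 0) ≤ x 1 - ε := by linarith
  simpa [sub_eq_add_neg] using this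

end Epigraph

lemma eq_zero_of_eventually_sqrt_abs_mul_le {a b : ℝ}
    (h : ∀ᶠ l in 𝓝[>] (0 : ℝ), √|l * a| ≤ l * b) : a = 0 := by
  have hbound : ∀ᶠ l in 𝓝[>] (0 : ℝ), |a| ≤ l * b ^ 2 := by
    filter_upwards [h, self_mem_nhdsWithin] with l hl (hpos : 0 < l)
    have hsq := (Real.sqrt_le_left (le_trans (Real.sqrt_nonneg _) hl)).mp hl
    rw [abs_mul, abs_of_pos hpos] at hsq
    nlinarith
  have hlim : Tendsto (fun l : ℝ => l * b ^ 2) (𝓝 0) (𝓝 0) := by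
    simpa using (tendsto_id (x := 𝓝 (0 : ℝ))).mul_const (b ^ 2)
  exact abs_nonpos_iff.mp (ge_of_tendsto (hlim.mono_left nhdsWithin_le_nhds) hbound)

lemma mem_closure_sphere_coord_ne_zero {u : ℝ²} (hu : u ∈ Metric.sphere 0 1) :
    u ∈ closure {w ∈ Metric.sphere (0 : ℝ²) 1 | w 0 ≠ 0} := by
  obtain hu0 | hu0 := ne_or_eq (u 0) 0
  · exact subset_closure ⟨hu, hu0⟩
  have hnorm : u 0 ^ 2 + u 1 ^ 2 = 1 := by
    simpa [mem_sphere_zero_iff_norm.mp hu, Fin.sum_univ_two] using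
      (EuclideanSpace.real_norm_sq_eq u).symm
  set c : ℝ → ℝ² := fun θ => !₂[Real.sin θ, Real.cos θ * u 1]
  have hc : Continuous c := by fun_prop
  have hc0 : c 0 = u := by
    ext i; fin_cases i <;> simp [c, hu0]
  have hc_sphere (θ : ℝ) : c θ ∈ Metric.sphere 0 1 := by
    rw [mem_sphere_zero_iff_norm, EuclideanSpace.norm_eq, Real.sqrt_eq_one, Fin.sum_univ_two]
    simp only [c, Matrix.cons_val_zero, Matrix.cons_val_one, Matrix.cons_val_fin_one,
      Real.norm_eq_abs]
    rw [sq_abs, sq_abs, mul_pow, show u 1 ^ 2 = 1 by simpa [hu0] using hnorm, mul_one,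
      Real.sin_sq_add_cos_sq]
  have hlim : Tendsto c (𝓝[>] 0) (𝓝 u) := hc0 ▸ (hc.tendsto 0).mono_left nhdsWithin_le_nhds
  refine mem_closure_of_tendsto hlim ?_
  filter_upwards [Ioo_mem_nhdsGT Real.pi_pos] with θ hθ
  exact ⟨hc_sphere θ, (Real.sin_pos_of_pos_of_lt_pi hθ.1 hθ.2).ne'⟩

/-- The set `S = {(t, y) : y ≥ √|t|}` (the epigraph of `t ↦ √|t|` in ℝ²) is ample,
yet the interior cone property fails for `S` at the origin. -/
theorem ample_not_ICP_epigraph_sqrt :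
    Ample {x : EuclideanSpace ℝ (Fin 2) | Real.sqrt |x 0| ≤ x 1} ∧
    (0 : EuclideanSpace ℝ (Fin 2)) ∈
      frontier {x : EuclideanSpace ℝ (Fin 2) | Real.sqrt |x 0| ≤ x 1} ∧
    ¬ (∃ U : Set (EuclideanSpace ℝ (Fin 2)),
        U.Nonempty ∧ U ⊆ Metric.sphere 0 1 ∧
        (∃ V, IsOpen V ∧ U = V ∩ Metric.sphere 0 1) ∧
        ∃ O : Set (EuclideanSpace ℝ (Fin 2)), IsOpen O ∧ (0 : EuclideanSpace ℝ (Fin 2)) ∈ O ∧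
          {y | ∃ l : ℝ, 0 < l ∧ ∃ u ∈ U, y = (0 : EuclideanSpace ℝ (Fin 2)) + l • u} ∩
              {y | y - 0 ∈ O} ⊆
            {x : EuclideanSpace ℝ (Fin 2) | Real.sqrt |x 0| ≤ x 1}) := by
  refine ⟨ample_epigraph (f := fun t => √|t|) (by fun_prop),
    mem_frontier_epigraph (f := fun t => √|t|) (x := 0) (by simp), ?_⟩
  rintro ⟨U, ⟨u₀, hu₀⟩, -, ⟨V, hV, rfl⟩, O, hO, h0O, hcone⟩
  have hU : ∀ u ∈ V ∩ Metric.sphere 0 1, u 0 = 0 := fun u hu => by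
    refine eq_zero_of_eventually_sqrt_abs_mul_le (b := u 1) ?_
    filter_upwards [(tendsto_add_smul_nhdsGT 0 u).eventually (hO.mem_nhds h0O),
      self_mem_nhdsWithin] with l hlO hl
    simpa using hcone ⟨⟨l, hl, u, hu, rfl⟩, show _ - 0 ∈ O by rw [sub_zero]; exact hlO⟩
  obtain ⟨w, hwV, hw, hw0⟩ := mem_closure_iff_nhds.mp
    (mem_closure_sphere_coord_ne_zero hu₀.2) V (hV.mem_nhds hu₀.1)
  exact hw0 (hU w ⟨hwV, hw⟩)
end

section
/- For the function f : ℝ² → ℝ defined by f(x) = |x₁ - 1| + |x₂| - 1 if x ∈ X₁ := (ℝ₋ × ℝ) ∪ (ℝ₊* × {0}), and f(x) = |x₁| + |x₂| otherwise, the set X₁ is locally thin (hence not ample), and the origin is the global minimizer of the restriction of f to cl(int(X₁)) ∪ X₂ = ℝ² \ (ℝ₊* × {0}), but the origin is not a local minimizer of f on ℝ². -/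
/-!
The interior of `X₁` is the open half-plane `{x₁ < 0}`: the ray `ℝ₊* × {0}` adds nothing to it,
so a neighbourhood of a point of the ray meets `X₁` but not `int X₁`. Off the ray both formulas
for `f` are nonnegative and vanish at the origin, whereas along the ray `f (t, 0) = |t - 1| - 1 = -t`,
which is negative arbitrarily close to the origin.
-/

open Set Filter Topology

def IsLocallyThin {X : Type*} [TopologicalSpace X] (S : Set X) : Prop :=
  ∃ N : Set X, IsOpen N ∧ (S ∩ N).Nonempty ∧ interior S ∩ N = ∅

theorem IsLocallyThin.not_subset_closure_interior {X : Type*} [TopologicalSpace X] {S : Set X}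
    (hS : IsLocallyThin S) : ¬ S ⊆ closure (interior S) := by
  obtain ⟨N, hN, ⟨x, hxS, hxN⟩, hdisj⟩ := hS
  intro hample
  obtain ⟨y, hyN, hyS⟩ := mem_closure_iff.1 (hample hxS) N hN hxN
  exact eq_empty_iff_forall_notMem.1 hdisj y ⟨hyS, hyN⟩

theorem interior_prod_univ_union_prod_singleton {X Y : Type*} [TopologicalSpace X]
    [TopologicalSpace Y] {s : Set X} (hs : IsClosed s) (t : Set X) (b : Y) [(𝓝[≠] b).NeBot] :
    interior (s ×ˢ univ ∪ t ×ˢ {b}) = interior s ×ˢ univ := by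
  rw [interior_union_isClosed_of_interior_empty (hs.prod isClosed_univ), interior_prod_eq,
    interior_univ]
  rw [interior_prod_eq, interior_singleton, prod_empty]

theorem not_isLocalMin_of_lt_along_path {X β : Type*} [TopologicalSpace X] [Preorder β]
    {f : X → β} {γ : ℝ → X} (hγ : ContinuousAt γ 0) {ε : ℝ} (hε : 0 < ε)
    (hlt : ∀ t ∈ Ioo 0 ε, f (γ t) < f (γ 0)) : ¬ IsLocalMin f (γ 0) := by
  intro hmin
  have hmin_right : ∀ᶠ t in 𝓝[>] 0, f (γ 0) ≤ f (γ t) :=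
    (hmin.comp_continuous hγ).filter_mono nhdsWithin_le_nhds
  obtain ⟨t, hle, ht⟩ := (hmin_right.and (Ioo_mem_nhdsGT hε)).exists
  exact (hlt t ht).not_ge hle

theorem halfPlane_union_ray_eq_prod :
    {p : ℝ × ℝ | p.1 ≤ 0} ∪ {p : ℝ × ℝ | 0 < p.1 ∧ p.2 = 0} = Iic 0 ×ˢ univ ∪ Ioi 0 ×ˢ {0} := by
  ext p
  simp

/-- For the discontinuous function of Proposition 8 of the paper:
`X₁ = (ℝ₋ × ℝ) ∪ (ℝ₊* × {0})` is locally thin (hence not ample), the origin is a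
global minimizer of the restriction of `f` to `cl(int X₁) ∪ X₂ = ℝ² \ (ℝ₊* × {0})`,
but the origin is not a local minimizer of `f` on ℝ². -/
theorem counterexample_assumption_X (f : ℝ × ℝ → ℝ)
    (X₁ : Set (ℝ × ℝ))
    (hX₁ : X₁ = {p : ℝ × ℝ | p.1 ≤ 0} ∪ {p : ℝ × ℝ | 0 < p.1 ∧ p.2 = 0})
    (hf₁ : ∀ p ∈ X₁, f p = |p.1 - 1| + |p.2| - 1)
    (hf₂ : ∀ p ∉ X₁, f p = |p.1| + |p.2|) :
    (∃ N : Set (ℝ × ℝ), IsOpen N ∧ (X₁ ∩ N).Nonempty ∧ interior X₁ ∩ N = ∅) ∧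
    ¬ (X₁ ⊆ closure (interior X₁)) ∧
    (closure (interior X₁) ∪ X₁ᶜ = {p : ℝ × ℝ | ¬ (0 < p.1 ∧ p.2 = 0)}) ∧
    (∀ p : ℝ × ℝ, ¬ (0 < p.1 ∧ p.2 = 0) → f (0, 0) ≤ f p) ∧
    ¬ IsLocalMin f (0, 0) := by
  rw [halfPlane_union_ray_eq_prod] at hX₁
  have hint : interior X₁ = Iio 0 ×ˢ univ := by
    rw [hX₁, interior_prod_univ_union_prod_singleton isClosed_Iic, interior_Iic]
  have hcl : closure (interior X₁) = Iic 0 ×ˢ univ := by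
    rw [hint, closure_prod_eq, closure_Iio, closure_univ]
  have hf₀ : f (0, 0) = 0 := by simp [hf₁ _ (by simp [hX₁] : ((0 : ℝ), (0 : ℝ)) ∈ X₁)]
  have hthin : IsLocallyThin X₁ :=
    ⟨Ioi 0 ×ˢ univ, isOpen_Ioi.prod isOpen_univ, ⟨(1, 0), by simp [hX₁], by simp⟩, by
      rw [hint, prod_inter_prod, Iio_inter_Ioi, Ioo_self, empty_prod]⟩
  refine ⟨hthin, hthin.not_subset_closure_interior, ?_, fun p hp => ?_, ?_⟩
  · rw [hcl, hX₁]
    ext p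
    simp only [mem_union, mem_compl_iff, mem_prod, mem_Iic, mem_Ioi, mem_univ,
      mem_singleton_iff, mem_ofPred_eq]
    grind
  · by_cases hpX : p ∈ X₁
    · have hp_le : p.1 ≤ 0 := by
        simp only [hX₁, mem_union, mem_prod, mem_Iic, mem_Ioi, mem_univ, mem_singleton_iff] at hpX
        grind
      rw [hf₀, hf₁ p hpX, abs_of_nonpos (by linarith)]
      linarith [abs_nonneg p.2]
    · rw [hf₀, hf₂ p hpX]
      positivity
  · refine not_isLocalMin_of_lt_along_path (γ := fun t => (t, 0)) (by fun_prop) one_pos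
      fun t ht => ?_
    change f (t, 0) < f (0, 0)
    rw [hf₀, hf₁ _ (by simp [hX₁, ht.1]), abs_of_nonpos (sub_nonpos.2 ht.2.le)]
    simp [ht.1]
end

section
/- Let Xᵢ be open pairwise disjoint subsets of ℝⁿ with f continuous on each Xᵢ. Let cl_f(Xᵢ) := {x ∈ cl(Xᵢ) : f restricted to Xᵢ ∪ {x} is continuous}, I(x) the minimal i with x ∈ cl_f(Xᵢ), and Yᵢ := {x : I(x) = i}. Then for every i, the chain of inclusions int(Xᵢ) = Xᵢ ⊆ Yᵢ ⊆ cl_f(Xᵢ) ⊆ cl(Xᵢ) holds; in particular int(Yᵢ) ⊇ Xᵢ and Yᵢ ⊆ cl(int(Yᵢ)), so Yᵢ is ample. -/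
/-!
A point of the open set `Xᵢ` lies in the closure of no other `Xⱼ`, so the index `I` assigns it
can only be `i`. Hence `Xᵢ ⊆ Yᵢ ⊆ cl_f(Xᵢ) ⊆ cl Xᵢ`, and a set squeezed between an open set and
its closure contains that open set in its interior, so it is ample.
-/

open Set Function

variable {α β ι : Type*} [TopologicalSpace α] [TopologicalSpace β]

/-- The paper's `cl_f(X)`. -/
def continuityClosure (f : α → β) (X : Set α) : Set α :=
  {x | x ∈ closure X ∧ ContinuousOn f (X ∪ {x})}

theorem continuityClosure_subset_closure (f : α → β) (X : Set α) :
    continuityClosure f X ⊆ closure X :=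
  fun _ hx => hx.1

theorem eq_of_mem_of_mem_closure_of_pairwise_disjoint {X : ι → Set α} {i j : ι} {x : α}
    (hopen : IsOpen (X i)) (hdisj : Pairwise (Disjoint on X)) (hi : x ∈ X i)
    (hj : x ∈ closure (X j)) : i = j := by
  by_contra hij
  exact disjoint_left.mp ((hdisj hij).closure_right hopen) hi hj

theorem subset_closure_interior_of_isOpen_subset {U Y : Set α} (hU : IsOpen U) (hUY : U ⊆ Y)
    (hYU : Y ⊆ closure U) : Y ⊆ closure (interior Y) :=
  hYU.trans (closure_mono (interior_maximal hUY hU))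

theorem chain_of_inclusions_Y_ample_general {n : ℕ}
    (f : EuclideanSpace ℝ (Fin n) → ℝ)
    (Xi : ℕ → Set (EuclideanSpace ℝ (Fin n)))
    (hopen : ∀ i, IsOpen (Xi i))
    (hdisj : Pairwise (Function.onFun Disjoint Xi))
    (clf : ℕ → Set (EuclideanSpace ℝ (Fin n)))
    (hclf : ∀ i, clf i = {x | x ∈ closure (Xi i) ∧ ContinuousOn f (Xi i ∪ {x})})
    (D : Set (EuclideanSpace ℝ (Fin n))) (hD : D = ⋃ i, closure (Xi i))
    (I : EuclideanSpace ℝ (Fin n) → ℕ)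
    (hI : ∀ x ∈ D, x ∈ clf (I x) ∧ ∀ j < I x, x ∉ clf j)
    (Y : ℕ → Set (EuclideanSpace ℝ (Fin n)))
    (hY : ∀ i, Y i = {x | x ∈ D ∧ I x = i}) :
    ∀ i, interior (Xi i) = Xi i ∧ Xi i ⊆ Y i ∧ Y i ⊆ clf i ∧ clf i ⊆ closure (Xi i) ∧
      Xi i ⊆ interior (Y i) ∧ Y i ⊆ closure (interior (Y i)) := by
  obtain rfl : clf = fun i => continuityClosure f (Xi i) := funext hclf
  intro i
  have hXY : Xi i ⊆ Y i := fun x hx => by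
    have hxD : x ∈ D := hD ▸ mem_iUnion.mpr ⟨i, subset_closure hx⟩
    have hIx := eq_of_mem_of_mem_closure_of_pairwise_disjoint (hopen i) hdisj hx
      (continuityClosure_subset_closure f _ (hI x hxD).1)
    rw [hY]
    exact ⟨hxD, hIx.symm⟩
  have hYclf : Y i ⊆ continuityClosure f (Xi i) := fun x hx => by
    obtain ⟨hxD, rfl⟩ := hY _ ▸ hx
    exact (hI x hxD).1
  have hYcl := hYclf.trans (continuityClosure_subset_closure f _)
  exact ⟨(hopen i).interior_eq, hXY, hYclf, continuityClosure_subset_closure f _,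
    (hopen i).subset_interior_iff.mpr hXY,
    subset_closure_interior_of_isOpen_subset (hopen i) hXY hYcl⟩

/-- With `cl_f(Xᵢ) = {x ∈ cl Xᵢ : f continuous on Xᵢ ∪ {x}}`, `I x` the minimal index
with `x ∈ cl_f(Xᵢ)` and `Yᵢ = {x : I x = i}`, the chain of inclusions
`int Xᵢ = Xᵢ ⊆ Yᵢ ⊆ cl_f(Xᵢ) ⊆ cl Xᵢ` holds; in particular `Xᵢ ⊆ int Yᵢ` and
`Yᵢ ⊆ cl (int Yᵢ)`, i.e. `Yᵢ` is ample. -/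
theorem chain_of_inclusions_Y_ample {n : ℕ}
    (f : EuclideanSpace ℝ (Fin n) → ℝ)
    (Xi : ℕ → Set (EuclideanSpace ℝ (Fin n)))
    (hopen : ∀ i, IsOpen (Xi i))
    (hdisj : Pairwise (Function.onFun Disjoint Xi))
    (hcont : ∀ i, ContinuousOn f (Xi i))
    (clf : ℕ → Set (EuclideanSpace ℝ (Fin n)))
    (hclf : ∀ i, clf i = {x | x ∈ closure (Xi i) ∧ ContinuousOn f (Xi i ∪ {x})})
    (D : Set (EuclideanSpace ℝ (Fin n))) (hD : D = ⋃ i, closure (Xi i))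
    (I : EuclideanSpace ℝ (Fin n) → ℕ)
    (hI : ∀ x ∈ D, x ∈ clf (I x) ∧ ∀ j < I x, x ∉ clf j)
    (Y : ℕ → Set (EuclideanSpace ℝ (Fin n)))
    (hY : ∀ i, Y i = {x | x ∈ D ∧ I x = i}) :
    ∀ i, interior (Xi i) = Xi i ∧ Xi i ⊆ Y i ∧ Y i ⊆ clf i ∧ clf i ⊆ closure (Xi i) ∧
      Xi i ⊆ interior (Y i) ∧ Y i ⊆ closure (interior (Y i)) :=
  chain_of_inclusions_Y_ample_general f Xi hopen hdisj clf hclf D hD I hI Y hY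
end

section
/- A set S ⊆ ℝⁿ has the exterior cone property in the sense of Vicente–Custódio (there exist at each boundary point x a cone K_x = x + ℝ₊*·U with U nonempty relatively open in the sphere, a neighborhood O_x of x, and an angle θ > 0 such that E_x := K_x ∩ O_x ⊆ ℝⁿ \ S and the unsigned angle between e − x and a − x is at least θ for all e ∈ E_x and a ∈ S ∩ O_x \ {x}) if and only if its complement ℝⁿ \ S has the interior cone property (at each boundary point x there exist a nonempty relatively open U ⊆ 𝕊ⁿ⁻¹, the cone K := ℝ₊*·U, and a neighborhood O of 0 with (x + K) ∩ (x + O) ⊆ ℝⁿ \ S). -/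
/-!
An exterior cone of `S` at `x` is an interior cone of `Sᶜ`, so one direction merely forgets the
angle condition. Conversely, given an interior cone with direction set `U`, shrink `U` to the cap
of radius `ε / 2` around a direction whose `ε`-cap lies in `U`. Every `a ∈ S` near `x` has its
direction `(a - x) / ‖a - x‖` outside `U`, hence at distance at least `ε / 2` from the small cap;
since a chord of the unit sphere is at most its arc, the angle is at least `ε / 2`.
-/

open InnerProductGeometry

/-- The interior cone property of Definition 5.2. -/
def HasICP {n : ℕ} (T : Set (EuclideanSpace ℝ (Fin n))) : Prop :=
  ∀ x ∈ frontier T, ∃ U : Set (EuclideanSpace ℝ (Fin n)),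
    U.Nonempty ∧ U ⊆ Metric.sphere 0 1 ∧
    (∃ V, IsOpen V ∧ U = V ∩ Metric.sphere 0 1) ∧
    ∃ O : Set (EuclideanSpace ℝ (Fin n)), IsOpen O ∧ (0 : EuclideanSpace ℝ (Fin n)) ∈ O ∧
      {y | ∃ l : ℝ, 0 < l ∧ ∃ u ∈ U, y = x + l • u} ∩ {y | y - x ∈ O} ⊆ T

/-- The exterior cone property of Vicente–Custódio. -/
def HasECP_VC {n : ℕ} (S : Set (EuclideanSpace ℝ (Fin n))) : Prop :=
  ∀ x ∈ frontier S, ∃ U : Set (EuclideanSpace ℝ (Fin n)),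
    U.Nonempty ∧ U ⊆ Metric.sphere 0 1 ∧
    (∃ V, IsOpen V ∧ U = V ∩ Metric.sphere 0 1) ∧
    ∃ O : Set (EuclideanSpace ℝ (Fin n)), IsOpen O ∧ x ∈ O ∧
      ∃ θ : ℝ, 0 < θ ∧
        ({y | ∃ l : ℝ, 0 < l ∧ ∃ u ∈ U, y = x + l • u} ∩ O ⊆ Sᶜ) ∧
        ∀ e ∈ {y | ∃ l : ℝ, 0 < l ∧ ∃ u ∈ U, y = x + l • u} ∩ O,
          ∀ a ∈ (S ∩ O) \ {x}, θ ≤ angle (e - x) (a - x)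

open Metric Set

section Cone

variable {E : Type*} [NormedAddCommGroup E] [InnerProductSpace ℝ E]

theorem norm_sub_le_angle_of_norm_eq_one {u v : E} (hu : ‖u‖ = 1) (hv : ‖v‖ = 1) :
    ‖u - v‖ ≤ angle u v := by
  have hsq : ‖u - v‖ ^ 2 ≤ angle u v ^ 2 := by
    have hcos := norm_sub_sq_eq_norm_sq_add_norm_sq_sub_two_mul_norm_mul_norm_mul_cos_angle u v
    rw [hu, hv] at hcos
    nlinarith [Real.one_sub_sq_div_two_le_cos (x := angle u v)]
  exact (pow_le_pow_iff_left₀ (norm_nonneg _) (angle_nonneg u v) two_ne_zero).1 hsq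

theorem half_le_angle_of_mem_ball_of_notMem {u₀ u v : E} {ε : ℝ} {U : Set E}
    (hball : ball u₀ ε ∩ sphere 0 1 ⊆ U) (hu : u ∈ ball u₀ (ε / 2) ∩ sphere 0 1)
    (hv : v ∈ sphere 0 1) (hvU : v ∉ U) : ε / 2 ≤ angle u v := by
  have hvu₀ : ε ≤ dist v u₀ := not_lt.1 fun h => hvU (hball ⟨h, hv⟩)
  have hsep : ε / 2 ≤ dist u v := by linarith [dist_triangle_left v u₀ u, mem_ball.1 hu.1]
  exact (dist_eq_norm u v ▸ hsep).trans
    (norm_sub_le_angle_of_norm_eq_one (by simpa using hu.2) (by simpa using hv))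

def apexCone (x : E) (U : Set E) : Set E :=
  {y | ∃ l : ℝ, 0 < l ∧ ∃ u ∈ U, y = x + l • u}

theorem apexCone_mono (x : E) {U U' : Set E} (h : U ⊆ U') : apexCone x U ⊆ apexCone x U' := by
  rintro y ⟨l, hl, u, hu, rfl⟩
  exact ⟨l, hl, u, h hu, rfl⟩

theorem mem_apexCone_of_inv_norm_smul_mem {x a : E} {U : Set E} (hax : a - x ≠ 0)
    (h : ‖a - x‖⁻¹ • (a - x) ∈ U) : a ∈ apexCone x U := by
  refine ⟨‖a - x‖, norm_pos_iff.2 hax, _, h, ?_⟩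
  rw [smul_inv_smul₀ (norm_ne_zero_iff.2 hax), add_sub_cancel]

end Cone

section ConeProperty

variable {n : ℕ} {S : Set (EuclideanSpace ℝ (Fin n))}

theorem HasECP_VC.hasICP_compl (h : HasECP_VC S) : HasICP Sᶜ := by
  intro x hx
  obtain ⟨U, hUne, hUs, hUV, O, hO, hxO, -, -, hsub, -⟩ := h x (frontier_compl S ▸ hx)
  refine ⟨U, hUne, hUs, hUV, (x + ·) ⁻¹' O, hO.preimage (continuous_const_add x),
    by simpa using hxO, ?_⟩
  rintro y ⟨hy, hyO⟩
  exact hsub ⟨hy, by simpa using hyO⟩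

theorem HasECP_VC.of_hasICP_compl (h : HasICP Sᶜ) : HasECP_VC S := by
  intro x hx
  obtain ⟨U, ⟨u₀, hu₀⟩, -, ⟨V, hV, rfl⟩, O, hO, h0O, hsub⟩ := h x (frontier_compl S ▸ hx)
  obtain ⟨ε, hε, hball⟩ := isOpen_iff.1 hV u₀ hu₀.1
  have hcone : apexCone x (V ∩ sphere 0 1) ∩ {y | y - x ∈ O} ⊆ Sᶜ := hsub
  have hU' : ball u₀ (ε / 2) ∩ sphere 0 1 ⊆ V ∩ sphere 0 1 :=
    inter_subset_inter_left _ ((ball_subset_ball (by linarith)).trans hball)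
  refine ⟨ball u₀ (ε / 2) ∩ sphere 0 1, ⟨u₀, mem_ball_self (half_pos hε), hu₀.2⟩,
    inter_subset_right, ⟨_, isOpen_ball, rfl⟩, {y | y - x ∈ O},
    hO.preimage (continuous_sub_right x), by simpa using h0O, ε / 2, half_pos hε,
    (inter_subset_inter_left _ (apexCone_mono x hU')).trans hcone, ?_⟩
  rintro e ⟨⟨l, hl, u, hu, rfl⟩, -⟩ a ⟨⟨haS, haO⟩, hax⟩
  have hax : a - x ≠ 0 := sub_ne_zero.2 hax
  have hv : ‖a - x‖⁻¹ • (a - x) ∉ V ∩ sphere 0 1 := fun hv =>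
    hcone ⟨mem_apexCone_of_inv_norm_smul_mem hax hv, haO⟩ haS
  calc ε / 2 ≤ angle u (‖a - x‖⁻¹ • (a - x)) :=
        half_le_angle_of_mem_ball_of_notMem (U := V ∩ sphere 0 1)
          (inter_subset_inter_left _ hball) hu
          (by simp [norm_smul, inv_mul_cancel₀ (norm_ne_zero_iff.2 hax)]) hv
    _ = angle (x + l • u - x) (a - x) := by
      rw [add_sub_cancel_left, angle_smul_left_of_pos _ _ hl,
        angle_smul_right_of_pos _ _ (inv_pos.2 (norm_pos_iff.2 hax))]

end ConeProperty

/-- A set has the Vicente–Custódio exterior cone property iff its complement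
has the interior cone property. -/
theorem ECP_iff_ICP_compl {n : ℕ} (S : Set (EuclideanSpace ℝ (Fin n))) :
    HasECP_VC S ↔ HasICP Sᶜ :=
  ⟨HasECP_VC.hasICP_compl, HasECP_VC.of_hasICP_compl⟩
end

section
/- Let S ⊆ ℝⁿ, x ∈ ∂S, and suppose there exist a nonempty relatively open U ⊊ 𝕊ⁿ⁻¹ and a neighborhood O of 0 with (x + ℝ₊*·U) ∩ (x + O) ⊆ ℝⁿ \ S. Choose θ > 0 small enough that U' := {u ∈ U : Θ(u,v) > θ for all v ∈ 𝕊ⁿ⁻¹ \ U} is nonempty. Then for all e ∈ (x + ℝ₊*·U') ∩ (x + O) and all a ∈ S ∩ (x+O) \ {x}, the segment [e,a] meets the boundary of x + ℝ₊*·U at some point y, and Θ(e−x, a−x) = Θ(e−x, y−x) + Θ(y−x, a−x) ≥ θ. -/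
/-!
The ray from `x` through `a` leaves the cone `x + ℝ₊*·U`, so its unit direction lies on the
sphere outside `U`; by the choice of `U'` it therefore makes an angle larger than `θ` with the
direction of `e`. The segment `[e, a]` is connected and runs from inside the cone to outside it,
so it crosses the cone's frontier at some `y`, and since `y` lies between `e` and `a` the angle
at `x` splits additively.
-/

open InnerProductGeometry

theorem IsPreconnected.inter_frontier_nonempty {X : Type*} [TopologicalSpace X] {s t : Set X}
    (hs : IsPreconnected s) (hst : (s ∩ t).Nonempty) (hs_t : (s \ t).Nonempty) :
    (s ∩ frontier t).Nonempty := by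
  by_contra h
  have hcover : s ⊆ interior t ∪ interior tᶜ := by
    intro z hz
    rw [Set.mem_union, interior_compl]
    by_cases hzi : z ∈ interior t
    · exact Or.inl hzi
    · exact Or.inr fun hzc => h ⟨z, hz, hzc, hzi⟩
  have hdisj : Disjoint (interior t) (interior tᶜ) :=
    disjoint_compl_right.mono interior_subset interior_subset
  obtain ⟨p, hp, hpt⟩ := hst
  obtain ⟨q, hq, hqt⟩ := hs_t
  rcases hs.subset_or_subset isOpen_interior isOpen_interior hdisj hcover with hin | hout
  · exact hqt (interior_subset (hin hq))
  · exact interior_subset (hout hp) hpt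

section Cone

variable {V : Type*} [NormedAddCommGroup V] [InnerProductSpace ℝ V]

/-- The cone `x + ℝ₊*·U`. -/
def rayCone (x : V) (U : Set V) : Set V :=
  {z | ∃ l : ℝ, 0 < l ∧ ∃ u ∈ U, z = x + l • u}

theorem inv_norm_smul_sub_mem_sphere_diff {U : Set V} {x a : V} (hax : a ≠ x)
    (ha : a ∉ rayCone x U) : ‖a - x‖⁻¹ • (a - x) ∈ Metric.sphere (0 : V) 1 \ U := by
  have hax0 : a - x ≠ 0 := sub_ne_zero.2 hax
  have hnorm : 0 < ‖a - x‖ := norm_pos_iff.2 hax0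
  refine ⟨by simpa using norm_smul_inv_norm (𝕜 := ℝ) hax0, fun hU => ha ?_⟩
  refine ⟨‖a - x‖, hnorm, _, hU, ?_⟩
  rw [smul_smul, mul_inv_cancel₀ hnorm.ne', one_smul, add_sub_cancel]

theorem le_angle_smul_of_notMem_rayCone {θ l : ℝ} {U : Set V} {u x a : V} (hl : 0 < l)
    (hu : ∀ v ∈ Metric.sphere (0 : V) 1 \ U, θ < angle u v) (hax : a ≠ x)
    (ha : a ∉ rayCone x U) : θ ≤ angle (l • u) (a - x) := by
  have hnorm : 0 < ‖a - x‖ := norm_pos_iff.2 (sub_ne_zero.2 hax)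
  calc θ ≤ angle u (‖a - x‖⁻¹ • (a - x)) :=
        (hu _ (inv_norm_smul_sub_mem_sphere_diff hax ha)).le
    _ = angle (l • u) (a - x) := by
        rw [angle_smul_left_of_pos _ _ hl, angle_smul_right_of_pos _ _ (inv_pos.2 hnorm)]

end Cone

theorem angle_bound_from_cone_general {n : ℕ}
    (S : Set (EuclideanSpace ℝ (Fin n))) (x : EuclideanSpace ℝ (Fin n))
    (U : Set (EuclideanSpace ℝ (Fin n)))
    (hUsub : U ⊆ Metric.sphere 0 1)
    (O : Set (EuclideanSpace ℝ (Fin n)))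
    (hcone : {z | ∃ l : ℝ, 0 < l ∧ ∃ u ∈ U, z = x + l • u} ∩ {z | z - x ∈ O} ⊆ Sᶜ)
    (θ : ℝ)
    (U' : Set (EuclideanSpace ℝ (Fin n)))
    (hU' : U' = {u | u ∈ U ∧ ∀ v ∈ Metric.sphere (0 : EuclideanSpace ℝ (Fin n)) 1 \ U,
      θ < angle u v}) :
    ∀ e ∈ {z | ∃ l : ℝ, 0 < l ∧ ∃ u ∈ U', z = x + l • u} ∩ {z | z - x ∈ O},
      ∀ a ∈ (S ∩ {z | z - x ∈ O}) \ {x},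
        ∃ y ∈ segment ℝ e a ∩ frontier {z | ∃ l : ℝ, 0 < l ∧ ∃ u ∈ U, z = x + l • u},
          angle (e - x) (a - x) = angle (e - x) (y - x) + angle (y - x) (a - x) ∧
          θ ≤ angle (e - x) (a - x) := by
  subst hU'
  rintro _ ⟨⟨l, hl, u, ⟨huU, hu_angle⟩, rfl⟩, -⟩ a ⟨⟨haS, haO⟩, hax⟩
  have haC : a ∉ rayCone x U := fun h => hcone ⟨h, haO⟩ haS
  have heC : x + l • u ∈ rayCone x U := ⟨l, hl, u, huU, rfl⟩
  obtain ⟨y, hy_seg, hy_fr⟩ := (convex_segment _ a).isPreconnected.inter_frontier_nonempty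
    ⟨_, left_mem_segment ℝ _ a, heC⟩ ⟨a, right_mem_segment ℝ _ a, haC⟩
  have hxe : x ≠ x + l • u := by
    simpa [hl.ne'] using Metric.ne_of_mem_sphere (hUsub huU) one_ne_zero
  refine ⟨y, ⟨hy_seg, hy_fr⟩, ?_, ?_⟩
  · exact (EuclideanGeometry.angle_add_of_ne_of_ne hxe (Ne.symm hax)
      (mem_segment_iff_wbtw.1 hy_seg)).symm
  · rw [add_sub_cancel_left]
    exact le_angle_smul_of_notMem_rayCone hl hu_angle hax haC

/-- Construction of the angle bound in the proof that the interior cone property of the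
complement implies the Vicente–Custódio exterior cone property. -/
theorem angle_bound_from_cone {n : ℕ}
    (S : Set (EuclideanSpace ℝ (Fin n))) (x : EuclideanSpace ℝ (Fin n))
    (hx : x ∈ frontier S)
    (U : Set (EuclideanSpace ℝ (Fin n)))
    (hUne : U.Nonempty) (hUsub : U ⊆ Metric.sphere 0 1)
    (hUne' : U ≠ Metric.sphere 0 1)
    (hUopen : ∃ V, IsOpen V ∧ U = V ∩ Metric.sphere 0 1)
    (O : Set (EuclideanSpace ℝ (Fin n))) (hO : IsOpen O)
    (h0O : (0 : EuclideanSpace ℝ (Fin n)) ∈ O)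
    (hcone : {z | ∃ l : ℝ, 0 < l ∧ ∃ u ∈ U, z = x + l • u} ∩ {z | z - x ∈ O} ⊆ Sᶜ)
    (θ : ℝ) (hθ : 0 < θ)
    (U' : Set (EuclideanSpace ℝ (Fin n)))
    (hU' : U' = {u | u ∈ U ∧ ∀ v ∈ Metric.sphere (0 : EuclideanSpace ℝ (Fin n)) 1 \ U,
      θ < angle u v})
    (hU'ne : U'.Nonempty) :
    ∀ e ∈ {z | ∃ l : ℝ, 0 < l ∧ ∃ u ∈ U', z = x + l • u} ∩ {z | z - x ∈ O},
      ∀ a ∈ (S ∩ {z | z - x ∈ O}) \ {x},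
        ∃ y ∈ segment ℝ e a ∩ frontier {z | ∃ l : ℝ, 0 < l ∧ ∃ u ∈ U, z = x + l • u},
          angle (e - x) (a - x) = angle (e - x) (y - x) + angle (y - x) (a - x) ∧
          θ ≤ angle (e - x) (a - x) :=
  angle_bound_from_cone_general S x U hUsub O hcone θ U' hU'
end
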